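/- Let G = ⟨N, T, P, S⟩ be an ε-free context-free grammar in Greibach form whose terminals are indexed as T = {t₁, …, t_k}, and let G′ be the grammar over terminal alphabet {0,1} with non-terminals N ∪ {B} ∪ {T₁, …, T_k} and productions B → 0, B → 1, T_j → B^{j−1} 1 B^{k−j} for each j, and A → T_j α for each production A → t_j α of G. Let σ be the substitution that maps each terminal t_j of G to the set {b ∈ {0,1}^k : the j-th letter of b is 1}. Then L(G′) = σ(L(G)), i.e. L(G′) is exactly the set of concatenations b₁b₂⋯b_m such that some string t_{j₁}t_{j₂}⋯t_{j_m} ∈ L(G) satisfies bᵢ ∈ σ(t_{jᵢ}) for all i. -/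

import Mathlib

instance {T N : Type} [DecidableEq T] [DecidableEq N] :
    DecidableEq (ContextFreeRule T N) := fun r₁ r₂ =>
  decidable_of_iff (r₁.input = r₂.input ∧ r₁.output = r₂.output)
    (by cases r₁; cases r₂; simp)

/-- An ε-free context-free grammar in Greibach form over the indexed terminal alphabet
`T = {t₁, …, t_k}` (modelled as `Fin k`), with nonterminals `N`, start symbol `S`, and
production set `P`, where `(A, j, α) ∈ P` represents the production `A → t_j α`
(a terminal followed by a list of nonterminals). -/
def greibachGrammarFin {N : Type} [DecidableEq N] (k : ℕ) (S : N)
    (P : Finset (N × Fin k × List N)) : ContextFreeGrammar (Fin k) :=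
  ⟨N, S, P.image fun x =>
    ⟨x.1, Symbol.terminal x.2.1 :: x.2.2.map Symbol.nonterminal⟩⟩

/-- The bitmap grammar `G′` over the terminal alphabet `{0,1}` (modelled as `Bool`):
its nonterminals are `N ∪ {B} ∪ {T₁, …, T_k}` (with `B = Sum.inr none` and
`T_j = Sum.inr (some j)`, all fresh), and its productions are `B → 0`, `B → 1`,
`T_j → B^{j−1} 1 B^{k−j}` for each `j`, and `A → T_j α` for each production `A → t_j α`. -/
def bitmapGrammar {N : Type} [DecidableEq N] (k : ℕ) (S : N)
    (P : Finset (N × Fin k × List N)) : ContextFreeGrammar Bool :=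
  ⟨N ⊕ Option (Fin k), Sum.inl S,
    {⟨Sum.inr none, [Symbol.terminal false]⟩, ⟨Sum.inr none, [Symbol.terminal true]⟩}
    ∪ (Finset.univ.image fun j : Fin k =>
        ⟨Sum.inr (some j),
          List.replicate j.val (Symbol.nonterminal (Sum.inr none)) ++
            Symbol.terminal true ::
              List.replicate (k - 1 - j.val) (Symbol.nonterminal (Sum.inr none))⟩)
    ∪ (P.image fun x =>
        ⟨Sum.inl x.1,
          Symbol.nonterminal (Sum.inr (some x.2.1)) ::
            x.2.2.map (fun B => Symbol.nonterminal (Sum.inl B))⟩)⟩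

/-! Each rule `A → t_j α` of `G` becomes `A → T_j α` in `G′`, so every derivation of `G`
lifts to `G′` with `t_j` replaced by `T_j`, and `T_j` derives exactly the words of `σ(t_j)`.
Conversely, a terminal derivation in `G′` from `A β` (with `A, β` from `N`) can be split along
its sentential forms: it starts with some rule `A → T_j α`, the nonterminal `T_j` yields a
bitmap of length `k ≥ 1`, and the remaining, strictly shorter word is derived from `α β`.
Induction on the length of the word then produces a leftmost derivation of `G` together with
the bitmaps. -/

namespace ContextFreeRule

variable {T N : Type} {r : ContextFreeRule T N}

lemma Rewrites.append_cases {x y v : List (Symbol T N)} (h : r.Rewrites (x ++ y) v) :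
    (∃ x', r.Rewrites x x' ∧ v = x' ++ y) ∨ (∃ y', r.Rewrites y y' ∧ v = x ++ y') := by
  induction x generalizing v with
  | nil => exact .inr ⟨v, h, rfl⟩
  | cons a x ih =>
    cases h with
    | head => exact .inl ⟨r.output ++ x, .head x, by simp⟩
    | cons _ h =>
      rcases ih h with ⟨x', hx, rfl⟩ | ⟨y', hy, rfl⟩
      · exact .inl ⟨a :: x', hx.cons a, rfl⟩
      · exact .inr ⟨y', hy, rfl⟩

end ContextFreeRule

namespace ContextFreeGrammar

variable {T : Type} {g : ContextFreeGrammar T}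

lemma eq_of_derives_map_terminal {w : List T} {v : List (Symbol T g.NT)}
    (h : g.Derives (w.map .terminal) v) : v = w.map .terminal := by
  induction h with
  | refl => rfl
  | tail _ hp ih =>
    subst ih
    obtain ⟨r, -, hr⟩ := hp
    simpa using hr.nonterminal_input_mem

lemma derives_nil_iff {w : List T} : g.Derives [] (w.map .terminal) ↔ w = [] :=
  ⟨fun h => by simpa using (eq_of_derives_map_terminal (w := []) h).symm,
    by rintro rfl; rfl⟩

lemma derives_append_iff {x y : List (Symbol T g.NT)} {w : List T} :
    g.Derives (x ++ y) (w.map .terminal) ↔ ∃ w₁ w₂, w = w₁ ++ w₂ ∧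
      g.Derives x (w₁.map .terminal) ∧ g.Derives y (w₂.map .terminal) := by
  refine ⟨fun h => ?_, ?_⟩
  · generalize hu : x ++ y = u at h
    induction h using Relation.ReflTransGen.head_induction_on generalizing x y with
    | refl =>
      obtain ⟨w₁, w₂, rfl, rfl, rfl⟩ := List.append_eq_map_iff.mp hu
      exact ⟨w₁, w₂, rfl, .refl _, .refl _⟩
    | head hp _ ih =>
      subst hu
      obtain ⟨r, hr, hrw⟩ := hp
      rcases hrw.append_cases with ⟨x', hx, rfl⟩ | ⟨y', hy, rfl⟩
      · obtain ⟨w₁, w₂, rfl, h₁, h₂⟩ := ih rfl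
        exact ⟨w₁, w₂, rfl, Produces.trans_derives ⟨r, hr, hx⟩ h₁, h₂⟩
      · obtain ⟨w₁, w₂, rfl, h₁, h₂⟩ := ih rfl
        exact ⟨w₁, w₂, rfl, h₁, Produces.trans_derives ⟨r, hr, hy⟩ h₂⟩
  · rintro ⟨w₁, w₂, rfl, hx, hy⟩
    simpa using (hx.append_right y).trans (hy.append_left _)

lemma derives_nonterminal_cons_iff {A : g.NT} {x : List (Symbol T g.NT)} {w : List T} :
    g.Derives (.nonterminal A :: x) (w.map .terminal) ↔
      ∃ r ∈ g.rules, r.input = A ∧ g.Derives (r.output ++ x) (w.map .terminal) := by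
  refine ⟨fun h => ?_, fun ⟨r, hr, hA, h⟩ => ?_⟩
  · obtain ⟨w₁, w₂, rfl, hA, hx⟩ := (derives_append_iff (x := [.nonterminal A])).mp h
    obtain hA | ⟨v, ⟨r, hr, hrw⟩, hv⟩ := hA.eq_or_head
    · simp [eq_comm (a := [_]), List.map_eq_cons_iff] at hA
    · obtain ⟨⟩ | ⟨_, ⟨⟩⟩ := hrw
      exact ⟨r, hr, rfl, derives_append_iff.mpr ⟨w₁, w₂, rfl, by simpa using hv, hx⟩⟩
  · subst hA
    exact Produces.trans_derives ⟨r, hr, .head x⟩ h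

lemma derives_terminal_cons_iff {a : T} {x : List (Symbol T g.NT)} {w : List T} :
    g.Derives (.terminal a :: x) (w.map .terminal) ↔
      ∃ w', w = a :: w' ∧ g.Derives x (w'.map .terminal) := by
  refine ⟨fun h => ?_, ?_⟩
  · obtain ⟨w₁, w', rfl, ha, hx⟩ := (derives_append_iff (x := [.terminal a])).mp h
    have : [a].map Symbol.terminal = w₁.map (Symbol.terminal (N := g.NT)) :=
      (eq_of_derives_map_terminal (w := [a]) ha).symm
    obtain rfl : [a] = w₁ := List.map_injective_iff.mpr (fun _ _ h => Symbol.terminal.inj h) this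
    exact ⟨w', rfl, hx⟩
  · rintro ⟨w', rfl, h⟩
    exact h.append_left [.terminal a]

section Map

variable {T₁ T₂ : Type} {g₁ : ContextFreeGrammar T₁} {g₂ : ContextFreeGrammar T₂}
  {f : g₁.NT → g₂.NT} {φ : Symbol T₁ g₁.NT → Symbol T₂ g₂.NT}

lemma Produces.map (hφ : ∀ A, φ (.nonterminal A) = .nonterminal (f A))
    (hrules : ∀ r ∈ g₁.rules, ⟨f r.input, r.output.map φ⟩ ∈ g₂.rules)
    {u v : List (Symbol T₁ g₁.NT)} (h : g₁.Produces u v) :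
    g₂.Produces (u.map φ) (v.map φ) := by
  obtain ⟨r, hr, hrw⟩ := h
  obtain ⟨p, q, rfl, rfl⟩ := hrw.exists_parts
  refine ⟨_, hrules r hr, ?_⟩
  simpa [hφ] using ContextFreeRule.rewrites_of_exists_parts ⟨f r.input, r.output.map φ⟩
    (p.map φ) (q.map φ)

lemma Derives.map (hφ : ∀ A, φ (.nonterminal A) = .nonterminal (f A))
    (hrules : ∀ r ∈ g₁.rules, ⟨f r.input, r.output.map φ⟩ ∈ g₂.rules)
    {u v : List (Symbol T₁ g₁.NT)} (h : g₁.Derives u v) :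
    g₂.Derives (u.map φ) (v.map φ) :=
  h.lift _ fun _ _ hp => hp.map hφ hrules

end Map

end ContextFreeGrammar

open ContextFreeGrammar

def IsBitmapOf {k : ℕ} (j : Fin k) (b : List Bool) : Prop :=
  b.length = k ∧ b[(j : ℕ)]? = some true

lemma isBitmapOf_iff_eq_append {k : ℕ} {j : Fin k} {b : List Bool} :
    IsBitmapOf j b ↔
      ∃ b₁ b₂, b = b₁ ++ true :: b₂ ∧ b₁.length = j ∧ b₂.length = k - 1 - j := by
  have hj := j.isLt
  constructor
  · rintro ⟨hlen, hb⟩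
    obtain ⟨_, hbj⟩ := List.getElem?_eq_some_iff.mp hb
    refine ⟨b.take j, b.drop (j + 1), ?_, by simp; omega, by simp; omega⟩
    rw [← hbj, List.getElem_cons_drop, List.take_append_drop]
  · rintro ⟨b₁, b₂, rfl, h₁, h₂⟩
    refine ⟨by simp; omega, ?_⟩
    rw [List.getElem?_append_right (by omega)]
    simp [h₁]

section Bitmap

variable {N : Type} [DecidableEq N] {k : ℕ} {S : N} {P : Finset (N × Fin k × List N)}

lemma mem_bitmapGrammar_rules {r : ContextFreeRule Bool (N ⊕ Option (Fin k))} :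
    r ∈ (bitmapGrammar k S P).rules ↔
      (∃ c, r = ⟨.inr none, [.terminal c]⟩) ∨
      (∃ j : Fin k, r = ⟨.inr (some j),
          List.replicate j (.nonterminal (.inr none)) ++
            .terminal true :: List.replicate (k - 1 - j) (.nonterminal (.inr none))⟩) ∨
      (∃ x ∈ P, r = ⟨.inl x.1,
          .nonterminal (.inr (some x.2.1)) :: x.2.2.map (.nonterminal ∘ .inl)⟩) := by
  unfold bitmapGrammar
  simp only [Finset.mem_union, Finset.mem_insert, Finset.mem_singleton,
    Finset.mem_image, Finset.mem_univ, true_and, eq_comm (b := r), Bool.exists_bool,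
    Function.comp_def]
  tauto

lemma mem_greibachGrammarFin_rules {r : ContextFreeRule (Fin k) N} :
    r ∈ (greibachGrammarFin k S P).rules ↔
      ∃ x ∈ P, r = ⟨x.1, .terminal x.2.1 :: x.2.2.map .nonterminal⟩ := by
  unfold greibachGrammarFin
  simp only [Finset.mem_image, eq_comm (b := r)]

lemma bitmapGrammar_derives_replicate_inr_none_iff {m : ℕ} {c : List Bool} :
    (bitmapGrammar k S P).Derives (List.replicate m (.nonterminal (.inr none)))
      (c.map .terminal) ↔ c.length = m := by
  induction m generalizing c with
  | zero => simp [derives_nil_iff]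
  | succ m ih =>
    refine derives_nonterminal_cons_iff.trans ⟨?_, ?_⟩
    · rintro ⟨r, hr, hin, h⟩
      rcases mem_bitmapGrammar_rules.mp hr with ⟨b, rfl⟩ | ⟨j, rfl⟩ | ⟨x, -, rfl⟩
      · obtain ⟨c', rfl, h'⟩ := derives_terminal_cons_iff.mp h
        simpa using ih.mp h'
      all_goals cases hin
    · intro hc
      obtain ⟨b, c', rfl⟩ := List.exists_cons_of_length_eq_add_one hc
      exact ⟨⟨.inr none, [.terminal b]⟩, mem_bitmapGrammar_rules.mpr (.inl ⟨b, rfl⟩), rfl,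
        derives_terminal_cons_iff.mpr ⟨c', rfl, ih.mpr (by simpa using hc)⟩⟩

lemma bitmapGrammar_derives_inr_some_iff {j : Fin k} {b : List Bool} :
    (bitmapGrammar k S P).Derives [.nonterminal (.inr (some j))] (b.map .terminal) ↔
      IsBitmapOf j b := by
  rw [isBitmapOf_iff_eq_append]
  refine derives_nonterminal_cons_iff.trans ⟨?_, ?_⟩
  · rintro ⟨r, hr, hin, h⟩
    rcases mem_bitmapGrammar_rules.mp hr with ⟨c, rfl⟩ | ⟨j', rfl⟩ | ⟨x, -, rfl⟩
    · cases hin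
    · cases hin
      rw [List.append_nil] at h
      obtain ⟨b₁, b', rfl, h₁, h'⟩ := derives_append_iff.mp h
      obtain ⟨b₂, rfl, h₂⟩ := derives_terminal_cons_iff.mp h'
      exact ⟨b₁, b₂, rfl, bitmapGrammar_derives_replicate_inr_none_iff.mp h₁,
        bitmapGrammar_derives_replicate_inr_none_iff.mp h₂⟩
    · cases hin
  · rintro ⟨b₁, b₂, rfl, h₁, h₂⟩
    refine ⟨_, mem_bitmapGrammar_rules.mpr (.inr (.inl ⟨j, rfl⟩)), rfl, ?_⟩
    rw [List.append_nil]
    exact derives_append_iff.mpr ⟨b₁, true :: b₂, rfl,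
      bitmapGrammar_derives_replicate_inr_none_iff.mpr h₁,
      derives_terminal_cons_iff.mpr
        ⟨b₂, rfl, bitmapGrammar_derives_replicate_inr_none_iff.mpr h₂⟩⟩

def bitmapSymbol : Symbol (Fin k) N → Symbol Bool (N ⊕ Option (Fin k))
  | .terminal j => .nonterminal (.inr (some j))
  | .nonterminal A => .nonterminal (.inl A)

lemma bitmapGrammar_derives_map_bitmapSymbol {u v : List (Symbol (Fin k) N)}
    (h : (greibachGrammarFin k S P).Derives u v) :
    (bitmapGrammar k S P).Derives (u.map bitmapSymbol) (v.map bitmapSymbol) :=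
  h.map (f := Sum.inl) (fun _ => rfl) fun r hr => by
    obtain ⟨x, hx, rfl⟩ := mem_greibachGrammarFin_rules.mp hr
    refine mem_bitmapGrammar_rules.mpr (.inr (.inr ⟨x, hx, ?_⟩))
    exact congrArg (ContextFreeRule.mk _ <| _ :: ·) (List.map_map ..)

lemma bitmapGrammar_derives_flatten {u : List (Fin k)} {bs : List (List Bool)}
    (h : List.Forall₂ IsBitmapOf u bs) :
    (bitmapGrammar k S P).Derives ((u.map .terminal).map bitmapSymbol)
      (bs.flatten.map .terminal) := by
  induction h with
  | nil => rfl
  | cons hb _ ih =>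
    exact (derives_append_iff (x := [_])).mpr
      ⟨_, _, rfl, bitmapGrammar_derives_inr_some_iff.mpr hb, ih⟩

theorem exists_greibachGrammarFin_derives_of_bitmapGrammar_derives (α : List N)
    (w : List Bool)
    (h : (bitmapGrammar k S P).Derives (α.map (.nonterminal ∘ .inl)) (w.map .terminal)) :
    ∃ u bs, (greibachGrammarFin k S P).Derives (α.map .nonterminal) (u.map .terminal) ∧
      List.Forall₂ IsBitmapOf u bs ∧ w = bs.flatten :=
  match α with
  | [] => ⟨[], [], .refl _, .nil, by simpa [eq_comm] using derives_nil_iff.mp h⟩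
  | A :: α => by
    obtain ⟨r, hr, hin, hder⟩ := derives_nonterminal_cons_iff.mp h
    rcases mem_bitmapGrammar_rules.mp hr with
      ⟨c, rfl⟩ | ⟨j, rfl⟩ | ⟨⟨A', j, β⟩, hx, rfl⟩
    · cases hin
    · cases hin
    cases hin
    obtain ⟨b, w', rfl, hb, h'⟩ := (derives_append_iff (x := [_])).mp hder
    have hb := bitmapGrammar_derives_inr_some_iff.mp hb
    have hshorter : w'.length < (b ++ w').length := by simp [hb.1, j.pos]
    obtain ⟨u, bs, hG, hbs, rfl⟩ :=
      exists_greibachGrammarFin_derives_of_bitmapGrammar_derives (β ++ α) w'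
        (by convert h' using 2; exact List.map_append ..)
    refine ⟨j :: u, b :: bs, ?_, .cons hb hbs, rfl⟩
    refine derives_nonterminal_cons_iff.mpr ⟨_, mem_greibachGrammarFin_rules.mpr ⟨_, hx, rfl⟩,
      rfl, derives_terminal_cons_iff.mpr ⟨u, rfl, ?_⟩⟩
    convert hG using 2
    exact (List.map_append ..).symm
termination_by w.length

end Bitmap

/-- Let `G` be an ε-free Greibach-form grammar over the indexed alphabet `T = {t₁,…,t_k}` and
`G′` the bitmap grammar over `{0,1}`.  Let `σ` be the substitution mapping each terminal `t_j`
to the set of strings `b ∈ {0,1}^k` whose `j`-th letter is `1`.  Then `L(G′) = σ(L(G))`: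
`L(G′)` is exactly the set of concatenations `b₁b₂⋯b_m` such that some string
`t_{j₁}t_{j₂}⋯t_{j_m} ∈ L(G)` satisfies `bᵢ ∈ σ(t_{jᵢ})` for all `i`. -/
theorem bitmapGrammar_language_eq_substitution
    {N : Type} [DecidableEq N] (k : ℕ) (S : N) (P : Finset (N × Fin k × List N)) :
    (bitmapGrammar k S P).language =
      { w : List Bool | ∃ (u : List (Fin k)) (bs : List (List Bool)),
          u ∈ (greibachGrammarFin k S P).language ∧
          List.Forall₂ (fun (j : Fin k) (b : List Bool) =>
            b.length = k ∧ b[(j : ℕ)]? = some true) u bs ∧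
          w = bs.flatten } := by
  ext w
  constructor
  · exact exists_greibachGrammarFin_derives_of_bitmapGrammar_derives [S] w
  · rintro ⟨u, bs, hG, hbs, rfl⟩
    exact (bitmapGrammar_derives_map_bitmapSymbol hG).trans (bitmapGrammar_derives_flatten hbs)
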